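/- Let θ be a CPWL function with (z̄,v̄) ∈ gph ∂θ. Then for every u ∈ 𝒦(z̄,v̄) one has (D∂θ)(z̄,v̄)(u) = {w ∈ (D̂*∂θ)(z̄,v̄)(−u) : ⟨w,u⟩ = 0}, and this set coincides with the set of minimizers of w ↦ −⟨w,u⟩ over w ∈ (D̂*∂θ)(z̄,v̄)(−u). -/

import Mathlib

open Filter Topology Set RealInnerProductSpace

noncomputable section

abbrev Ev (k : ℕ) := EuclideanSpace ℝ (Fin k)

/-- The Bouligand–Severi tangent cone to a set `s` at `x`. -/
def tcone {E : Type*} [NormedAddCommGroup E] [NormedSpace ℝ E] (s : Set E) (x : E) : Set E :=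
  {w | ∃ (z : ℕ → E) (c : ℕ → ℝ), (∀ k, z k ∈ s) ∧ (∀ k, 0 ≤ c k) ∧
      Tendsto z atTop (𝓝 x) ∧ Tendsto (fun k => c k • (z k - x)) atTop (𝓝 w)}

/-- The data of a convex piecewise linear (CPWL) extended-real-valued function on `ℝ^m`:
`θ(z) = max_i (⟨a i, z⟩ - al i)` on the polyhedron `dom θ = {z | ⟨d i, z⟩ ≤ be i ∀ i}`,
and `θ(z) = +∞` outside of it. -/
structure CPWL (m : ℕ) where
  l : ℕ
  p : ℕ
  hl : 0 < l
  a : Fin l → Ev m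
  al : Fin l → ℝ
  d : Fin p → Ev m
  be : Fin p → ℝ
  dom_nonempty : ∃ z : Ev m, ∀ i, ⟪d i, z⟫ ≤ be i

namespace CPWL

variable {m : ℕ} (θ : CPWL m)

/-- The (polyhedral) domain of the CPWL function. -/
def dom : Set (Ev m) := {z | ∀ i, ⟪θ.d i, z⟫ ≤ θ.be i}

/-- The real value `max_i (⟨a i, z⟩ - al i)` of the CPWL function (meaningful on its domain). -/
def val (z : Ev m) : ℝ := ⨆ i : Fin θ.l, (⟪θ.a i, z⟫ - θ.al i)

/-- The CPWL function as an extended-real-valued function. -/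
def eval (z : Ev m) : EReal :=
  @ite _ (z ∈ θ.dom) (Classical.propDecidable _) ((θ.val z : ℝ) : EReal) ⊤

/-- The subdifferential (of convex analysis) of the CPWL function. -/
def subdiff (z : Ev m) : Set (Ev m) :=
  {v | z ∈ θ.dom ∧ ∀ z' ∈ θ.dom, ⟪v, z' - z⟫ ≤ θ.val z' - θ.val z}

/-- Active indices `K(z)` of the max-representation. -/
def Kact (z : Ev m) : Set (Fin θ.l) := {i | θ.val z = ⟪θ.a i, z⟫ - θ.al i}

/-- Active indices `I(z)` of the domain constraints. -/
def Iact (z : Ev m) : Set (Fin θ.p) := {i | ⟪θ.d i, z⟫ = θ.be i}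

/-- The critical cone `𝒦(z̄,v̄) = {w ∈ T(z̄; dom θ) : ⟨v̄,w⟩ = θ′(z̄;w)}`. -/
def crit (zb vb : Ev m) : Set (Ev m) :=
  {w | w ∈ tcone θ.dom zb ∧
    Tendsto (fun t : ℝ => (θ.val (zb + t • w) - θ.val zb) / t) (𝓝[>] (0 : ℝ))
      (𝓝 ⟪vb, w⟫)}

/-- The graph of the subdifferential mapping. -/
def gph : Set (Ev m × Ev m) := {zv | zv.2 ∈ θ.subdiff zv.1}

/-- The graphical derivative `(D∂θ)(z̄,v̄)(u)`. -/
def Dsub (zb vb u : Ev m) : Set (Ev m) := {w | (u, w) ∈ tcone θ.gph (zb, vb)}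

/-- The regular coderivative `(D̂*∂θ)(z̄,v̄)(u)`. -/
def Dhat (zb vb u : Ev m) : Set (Ev m) :=
  {w | ∀ h ∈ tcone θ.gph (zb, vb), ⟪w, h.1⟫ - ⟪u, h.2⟫ ≤ 0}

end CPWL

section VarSys

variable {n m : ℕ}

/-- The adjoint `∇Φ(x)*` of the Jacobian of `Φ` at `x`. -/
def adjD (Φ : Ev n → Ev m) (x : Ev n) : Ev m →L[ℝ] Ev n :=
  ContinuousLinearMap.adjoint (fderiv ℝ Φ x)

/-- `Ψ(x,v) = f(x) + ∇Φ(x)* v`. -/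
def Psi (f : Ev n → Ev n) (Φ : Ev n → Ev m) (x : Ev n) (v : Ev m) : Ev n :=
  f x + adjD Φ x v

/-- The partial Jacobian `∇ₓΨ(x̄,v̄)`. -/
def gradxPsi (f : Ev n → Ev n) (Φ : Ev n → Ev m) (xb : Ev n) (vb : Ev m) :
    Ev n →L[ℝ] Ev n :=
  fderiv ℝ (fun x => Psi f Φ x vb) xb

/-- The Lagrange multiplier set `Λ(x̄)` of the variational system. -/
def Lam (f : Ev n → Ev n) (Φ : Ev n → Ev m) (θ : CPWL m) (xb : Ev n) : Set (Ev m) :=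
  {v | Psi f Φ xb v = 0 ∧ v ∈ θ.subdiff (Φ xb)}

/-- `v̄` is a critical multiplier for the variational system. -/
def IsCritical (f : Ev n → Ev n) (Φ : Ev n → Ev m) (θ : CPWL m) (xb : Ev n) (vb : Ev m) :
    Prop :=
  ∃ ξ : Ev n, ξ ≠ 0 ∧ ∃ w ∈ θ.Dsub (Φ xb) vb (fderiv ℝ Φ xb ξ),
    gradxPsi f Φ xb vb ξ + adjD Φ xb w = 0

/-- The solution map of the canonically perturbed variational system. -/
def Smap (f : Ev n → Ev n) (Φ : Ev n → Ev m) (θ : CPWL m) (p₁ : Ev n) (p₂ : Ev m) :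
    Set (Ev n × Ev m) :=
  {xv | Psi f Φ xv.1 xv.2 = p₁ ∧ xv.2 ∈ θ.subdiff (Φ xv.1 + p₂)}

end VarSys

section General

variable {n m : ℕ}

/-- The subdifferential of a general extended-real-valued function. -/
def subdiffE (θ : Ev m → EReal) (z : Ev m) : Set (Ev m) :=
  {v | ∀ z', ((⟪v, z' - z⟫ : ℝ) : EReal) ≤ θ z' - θ z}

/-- The graph of the subdifferential of a general extended-real-valued function. -/
def gphE (θ : Ev m → EReal) : Set (Ev m × Ev m) := {zv | zv.2 ∈ subdiffE θ zv.1}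

/-- The graphical derivative of the subdifferential, general case. -/
def DsubE (θ : Ev m → EReal) (zb vb u : Ev m) : Set (Ev m) :=
  {w | (u, w) ∈ tcone (gphE θ) (zb, vb)}

/-- The Lagrange multiplier set, general case. -/
def LamE (f : Ev n → Ev n) (Φ : Ev n → Ev m) (θ : Ev m → EReal) (xb : Ev n) :
    Set (Ev m) :=
  {v | Psi f Φ xb v = 0 ∧ v ∈ subdiffE θ (Φ xb)}

/-- The solution map of the canonically perturbed variational system, general case. -/
def SmapE (f : Ev n → Ev n) (Φ : Ev n → Ev m) (θ : Ev m → EReal) (p₁ : Ev n)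
    (p₂ : Ev m) : Set (Ev n × Ev m) :=
  {xv | Psi f Φ xv.1 xv.2 = p₁ ∧ xv.2 ∈ subdiffE θ (Φ xv.1 + p₂)}

end General

section Composite

variable {n m : ℕ}

/-- The gradient `∇ₓL(·,v)` of the Lagrangian `L(x,v) = φ₀(x) + ⟨Φ(x),v⟩`. -/
def gradL (φ₀ : Ev n → ℝ) (Φ : Ev n → Ev m) (v : Ev m) (x : Ev n) : Ev n :=
  gradient (fun y => φ₀ y + ⟪Φ y, v⟫) x

/-- The Hessian `∇²ₓₓL(x̄,v)` as a linear operator. -/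
def HessOp (φ₀ : Ev n → ℝ) (Φ : Ev n → Ev m) (v : Ev m) (xb : Ev n) : Ev n →L[ℝ] Ev n :=
  fderiv ℝ (gradL φ₀ Φ v) xb

/-- The Lagrange multiplier set `Λ_com(x̄)` of the composite optimization problem. -/
def LamCom (φ₀ : Ev n → ℝ) (Φ : Ev n → Ev m) (θ : CPWL m) (xb : Ev n) : Set (Ev m) :=
  {v | gradient φ₀ xb + adjD Φ xb v = 0 ∧ v ∈ θ.subdiff (Φ xb)}

/-- Criticality of a multiplier in the composite optimization setting. -/
def IsCriticalCom (φ₀ : Ev n → ℝ) (Φ : Ev n → Ev m) (θ : CPWL m) (xb : Ev n) (v : Ev m) :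
    Prop :=
  ∃ ξ : Ev n, ξ ≠ 0 ∧ ∃ w ∈ θ.Dsub (Φ xb) v (fderiv ℝ Φ xb ξ),
    HessOp φ₀ Φ v xb ξ + adjD Φ xb w = 0

/-- The solution map of the canonically perturbed KKT system of composite optimization. -/
def SKKT (φ₀ : Ev n → ℝ) (Φ : Ev n → Ev m) (θ : CPWL m) (p₁ : Ev n) (p₂ : Ev m) :
    Set (Ev n × Ev m) :=
  {xv | gradient φ₀ xv.1 + adjD Φ xv.1 xv.2 = p₁ ∧ xv.2 ∈ θ.subdiff (Φ xv.1 + p₂)}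

/-- `x̄` is a local minimizer of `φ₀ + θ∘Φ`. -/
def LocalMin (φ₀ : Ev n → ℝ) (Φ : Ev n → Ev m) (θ : CPWL m) (xb : Ev n) : Prop :=
  ∃ U ∈ 𝓝 xb, ∀ x ∈ U,
    ((φ₀ xb : ℝ) : EReal) + θ.eval (Φ xb) ≤ ((φ₀ x : ℝ) : EReal) + θ.eval (Φ x)

end Composite

section Calmness

variable {n m : ℕ}

/-- Isolated calmness of a solution map at `((0,0), q0)`. -/
def IsolCalm (S : Ev n × Ev m → Set (Ev n × Ev m)) (q0 : Ev n × Ev m) : Prop :=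
  ∃ c : ℝ, 0 ≤ c ∧ ∃ U ∈ 𝓝 (0 : Ev n × Ev m), ∃ V ∈ 𝓝 q0,
    ∀ p ∈ U, ∀ q ∈ S p ∩ V, ‖q - q0‖ ≤ c * (‖p.1‖ + ‖p.2‖)

/-- Robust isolated calmness of a solution map at `((0,0), q0)`. -/
def RobustIsolCalm (S : Ev n × Ev m → Set (Ev n × Ev m)) (q0 : Ev n × Ev m) : Prop :=
  ∃ c : ℝ, 0 ≤ c ∧ ∃ U ∈ 𝓝 (0 : Ev n × Ev m), ∃ V ∈ 𝓝 q0,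
    (∀ p ∈ U, ∀ q ∈ S p ∩ V, ‖q - q0‖ ≤ c * (‖p.1‖ + ‖p.2‖)) ∧
    (∀ p ∈ U, (S p ∩ V).Nonempty)

/-- The Lipschitz-like (Aubin) property of a solution map around `((0,0), q0)`. -/
def LipschitzLike (S : Ev n × Ev m → Set (Ev n × Ev m)) (q0 : Ev n × Ev m) : Prop :=
  ∃ c : ℝ, 0 ≤ c ∧ ∃ U ∈ 𝓝 (0 : Ev n × Ev m), ∃ V ∈ 𝓝 q0,
    ∀ p ∈ U, ∀ p' ∈ U, ∀ q ∈ S p ∩ V, ∃ q' ∈ S p', ‖q - q'‖ ≤ c * ‖p - p'‖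

end Calmness

/-!
Near `zb` only the active pieces and constraints of `θ` matter, so along every direction of the
polyhedral cone `C = critPoly zb vb` the function `θ` is affine with slope `⟪vb, ·⟫`; in
particular `𝒦(zb, vb) ⊆ C`. The tangent cone to `gph ∂θ` at `(zb, vb)` is the graph of the normal
cone mapping of `C`: the difference quotients of graph points satisfy monotonicity-type
inequalities that survive in the limit, and conversely, for `w ∈ C°` with `⟪w, u⟫ = 0`, Farkas'
lemma bounds `⟪w, z - zb⟫` by a multiple of the excess `θ z - θ zb - ⟪vb, z - zb⟫`, so that
`vb + t w ∈ ∂θ(zb + t u)` for small `t > 0`. Hence `D̂*∂θ(zb, vb)(-u) = C°`, and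
`D∂θ(zb, vb)(u) = C° ∩ uᗮ` is exactly where `-⟪·, u⟫ ≥ 0` attains its minimum `0` over `C°`.
-/

theorem exists_nonneg_sum_insert_eq {ι M : Type*} [DecidableEq ι] [AddCommMonoid M] [Module ℝ M]
    {s : Finset ι} {j : ι} (hj : j ∉ s) {c : ι → ℝ} (hc : ∀ i, 0 ≤ c i) {κ : ℝ} (hκ : 0 ≤ κ)
    (v : ι → M) : ∃ c' : ι → ℝ, (∀ i, 0 ≤ c' i) ∧
      ∑ i ∈ insert j s, c' i • v i = κ • v j + ∑ i ∈ s, c i • v i := by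
  refine ⟨Function.update c j κ, fun i => ?_, ?_⟩
  · rcases eq_or_ne i j with rfl | hi <;> simp [*]
  rw [Finset.sum_insert hj, Function.update_self]
  exact congrArg _ <| Finset.sum_congr rfl fun i hi => by
    rw [Function.update_of_ne (ne_of_mem_of_not_mem hi hj)]

/-- Farkas' lemma. -/
theorem exists_nonneg_eq_sum_smul_of_inner_le {ι E : Type*} [NormedAddCommGroup E]
    [InnerProductSpace ℝ E] (s : Finset ι) (v : ι → E) (w : E)
    (h : ∀ x, (∀ i ∈ s, ⟪v i, x⟫ ≤ 0) → ⟪w, x⟫ ≤ 0) :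
    ∃ c : ι → ℝ, (∀ i, 0 ≤ c i) ∧ w = ∑ i ∈ s, c i • v i := by
  classical
  induction s using Finset.induction_on generalizing v w with
  | empty => exact ⟨0, fun _ => le_rfl, by simpa using real_inner_self_nonpos.mp (h w (by simp))⟩
  | insert j t hj ih =>
    by_cases ht : ∀ x, (∀ i ∈ t, ⟪v i, x⟫ ≤ 0) → ⟪w, x⟫ ≤ 0
    · obtain ⟨c, hc, rfl⟩ := ih v w ht
      obtain ⟨c', hc', hsum⟩ := exists_nonneg_sum_insert_eq hj hc le_rfl v
      exact ⟨c', hc', by rw [hsum, zero_smul, zero_add]⟩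
    push Not at ht
    obtain ⟨x₀, hx₀, hwx₀⟩ := ht
    set a := ⟪v j, x₀⟫
    have ha : 0 < a := by
      by_contra! ha
      exact hwx₀.not_ge (h x₀ (Finset.forall_mem_insert _ _ _ |>.2 ⟨ha, hx₀⟩))
    -- project along `v j` onto `x₀ᗮ`; dually, the constraint `j` becomes `0 ≤ 0`
    let P : E → E := fun y => y - (⟪y, x₀⟫ / a) • v j
    have hP : ∀ y x, ⟪P y, x⟫ = ⟪y, x - (⟪v j, x⟫ / a) • x₀⟫ := by
      intro y x
      simp only [P, inner_sub_left, inner_sub_right, real_inner_smul_left, real_inner_smul_right]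
      ring
    obtain ⟨c, hc, hwc⟩ := ih (P ∘ v) (P w) fun x hx => by
      rw [hP]
      refine h _ (Finset.forall_mem_insert _ _ _ |>.2 ⟨?_, fun i hi => ?_⟩)
      · rw [inner_sub_right, real_inner_smul_right, div_mul_cancel₀ _ ha.ne', sub_self]
      · rw [← hP]; exact hx i hi
    set κ := ⟪w, x₀⟫ / a - ∑ i ∈ t, c i * (⟪v i, x₀⟫ / a)
    have hκ : 0 ≤ κ := by
      have : ∑ i ∈ t, c i * (⟪v i, x₀⟫ / a) ≤ 0 :=
        Finset.sum_nonpos fun i hi => mul_nonpos_of_nonneg_of_nonpos (hc i)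
          (div_nonpos_of_nonpos_of_nonneg (hx₀ i hi) ha.le)
      linarith [div_pos hwx₀ ha]
    obtain ⟨c', hc', hsum⟩ := exists_nonneg_sum_insert_eq hj hc hκ v
    refine ⟨c', hc', hsum ▸ ?_⟩
    simp only [P, Function.comp_apply, smul_sub, smul_smul, Finset.sum_sub_distrib,
      ← Finset.sum_smul] at hwc
    simp only [κ, sub_smul]
    linear_combination (norm := module) hwc

theorem eventually_forall_add_mul_le {ι : Type*} [Finite ι] {b B c C : ι → ℝ}
    (hb : ∀ i, b i ≤ B i) (hc : ∀ i, b i = B i → c i ≤ C i) :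
    ∀ᶠ t in 𝓝[>] (0 : ℝ), ∀ i, b i + t * c i ≤ B i + t * C i := by
  refine eventually_all.2 fun i => ?_
  rcases (hb i).eq_or_lt with h | h
  · filter_upwards [self_mem_nhdsWithin] with t ht
    have := mul_le_mul_of_nonneg_left (hc i h) (le_of_lt ht)
    linarith
  · refine nhdsWithin_le_nhds ((ContinuousAt.eventually_lt ?_ ?_ (by simpa using h)).mono
      fun _ ht => ht.le) <;> fun_prop

section TangentCone

variable {E : Type*} [NormedAddCommGroup E]

theorem mem_tcone_of_eventually [NormedSpace ℝ E] {s : Set E} {x u : E}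
    (h : ∀ᶠ t in 𝓝[>] (0 : ℝ), x + t • u ∈ s) : u ∈ tcone s x := by
  have hseq : Tendsto (fun k : ℕ => 1 / ((k : ℝ) + 1)) atTop (𝓝[>] 0) :=
    tendsto_nhdsWithin_of_tendsto_nhds_of_eventually_within _
      tendsto_one_div_add_atTop_nhds_zero_nat (Eventually.of_forall fun k => by simp; positivity)
  obtain ⟨N, hN⟩ := eventually_atTop.1 (hseq.eventually h)
  refine ⟨fun k => x + (1 / (((k + N : ℕ) : ℝ) + 1)) • u, fun k => ((k + N : ℕ) : ℝ) + 1,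
    fun k => hN _ (by omega), fun k => by positivity, ?_, ?_⟩
  · simpa using ((tendsto_add_atTop_iff_nat N).2 (hseq.mono_right nhdsWithin_le_nhds)).smul_const u
      |>.const_add x
  · refine tendsto_const_nhds.congr fun k => ?_
    rw [add_sub_cancel_left, smul_smul, mul_one_div_cancel (by positivity), one_smul]

variable [InnerProductSpace ℝ E]

theorem inner_le_zero_of_mem_tcone {s : Set E} {x u g : E} (hu : u ∈ tcone s x)
    (hs : ∀ z ∈ s, ⟪g, z - x⟫ ≤ 0) : ⟪g, u⟫ ≤ 0 := by
  obtain ⟨z, c, hz, hc, -, hlim⟩ := hu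
  refine le_of_tendsto (tendsto_const_nhds.inner hlim) (Eventually.of_forall fun k => ?_)
  rw [real_inner_smul_right]
  exact mul_nonpos_of_nonneg_of_nonpos (hc k) (hs _ (hz k))

theorem inner_add_inner_le_zero_of_mem_tcone {S : Set (E × E)} {x y u w p q : E}
    (huw : (u, w) ∈ tcone S (x, y))
    (hS : ∀ zv ∈ S, ⟪p, zv.1 - x⟫ + ⟪q, zv.2 - y⟫ ≤ ⟪zv.2 - y, zv.1 - x⟫) :
    ⟪p, u⟫ + ⟪q, w⟫ ≤ 0 := by
  obtain ⟨zv, c, hzv, hc, hlim, hdir⟩ := huw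
  have hu : Tendsto (fun k => c k • ((zv k).1 - x)) atTop (𝓝 u) := hdir.fst_nhds
  have hw : Tendsto (fun k => c k • ((zv k).2 - y)) atTop (𝓝 w) := hdir.snd_nhds
  have hz : Tendsto (fun k => (zv k).1 - x) atTop (𝓝 0) := by
    simpa using hlim.fst_nhds.sub_const x
  have h0 : Tendsto (fun k => ⟪c k • ((zv k).2 - y), (zv k).1 - x⟫) atTop (𝓝 0) := by
    simpa using hw.inner hz
  refine le_of_tendsto_of_tendsto' ((tendsto_const_nhds.inner hu).add
    (tendsto_const_nhds.inner hw)) h0 fun k => ?_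
  simp only [real_inner_smul_left, real_inner_smul_right, ← mul_add]
  exact mul_le_mul_of_nonneg_left (hS _ (hzv k)) (hc k)

theorem inner_nonneg_of_mem_tcone {S : Set (E × E)} {x y u w : E}
    (huw : (u, w) ∈ tcone S (x, y)) (hS : ∀ zv ∈ S, 0 ≤ ⟪zv.2 - y, zv.1 - x⟫) :
    0 ≤ ⟪w, u⟫ := by
  obtain ⟨zv, c, hzv, hc, -, hdir⟩ := huw
  have hu : Tendsto (fun k => c k • ((zv k).1 - x)) atTop (𝓝 u) := hdir.fst_nhds
  have hw : Tendsto (fun k => c k • ((zv k).2 - y)) atTop (𝓝 w) := hdir.snd_nhds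
  refine ge_of_tendsto (hw.inner hu) (Eventually.of_forall fun k => ?_)
  simp only [real_inner_smul_left, real_inner_smul_right]
  exact mul_nonneg (hc k) (mul_nonneg (hc k) (hS _ (hzv k)))

end TangentCone

namespace CPWL

variable {m : ℕ} (θ : CPWL m)

instance : Nonempty (Fin θ.l) := ⟨⟨0, θ.hl⟩⟩

theorem le_val (z : Ev m) (i : Fin θ.l) : ⟪θ.a i, z⟫ - θ.al i ≤ θ.val z :=
  le_ciSup (f := fun i => ⟪θ.a i, z⟫ - θ.al i) (Set.finite_range _).bddAbove i

theorem val_le {z : Ev m} {r : ℝ} (h : ∀ i, ⟪θ.a i, z⟫ - θ.al i ≤ r) : θ.val z ≤ r :=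
  ciSup_le h

theorem Kact_nonempty (z : Ev m) : (θ.Kact z).Nonempty :=
  let ⟨i, hi⟩ := exists_eq_ciSup_of_finite (f := fun i => ⟪θ.a i, z⟫ - θ.al i)
  ⟨i, hi.symm⟩

/-- `θ(z + t x) = θ(z) + t θ'(z; x)` for small `t > 0`, where `θ'(z; x)` is the largest slope
`⟪a i, x⟫` among the pieces active at `z`. -/
theorem exists_eventually_val_add_smul (z x : Ev m) :
    ∃ i₀ ∈ θ.Kact z, (∀ i ∈ θ.Kact z, ⟪θ.a i, x⟫ ≤ ⟪θ.a i₀, x⟫) ∧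
      ∀ᶠ t in 𝓝[>] (0 : ℝ), θ.val (z + t • x) = θ.val z + t * ⟪θ.a i₀, x⟫ := by
  obtain ⟨i₀, hi₀, hmax⟩ :=
    Set.exists_max_image _ (fun i => ⟪θ.a i, x⟫) (Set.toFinite _) (θ.Kact_nonempty z)
  refine ⟨i₀, hi₀, hmax, ?_⟩
  filter_upwards [eventually_forall_add_mul_le (B := fun _ => θ.val z)
    (C := fun _ => ⟪θ.a i₀, x⟫) (θ.le_val z) fun i hi => hmax i hi.symm] with t ht
  have hlin : ∀ i, ⟪θ.a i, z + t • x⟫ - θ.al i = ⟪θ.a i, z⟫ - θ.al i + t * ⟪θ.a i, x⟫ :=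
    fun i => by rw [inner_add_right, real_inner_smul_right]; ring
  refine le_antisymm (θ.val_le fun i => (hlin i).trans_le (ht i)) ?_
  have : θ.val z = ⟪θ.a i₀, z⟫ - θ.al i₀ := hi₀
  linarith [θ.le_val (z + t • x) i₀, hlin i₀]

theorem eventually_add_smul_mem_dom {z x : Ev m} (hz : z ∈ θ.dom)
    (hx : ∀ j ∈ θ.Iact z, ⟪θ.d j, x⟫ ≤ 0) : ∀ᶠ t in 𝓝[>] (0 : ℝ), z + t • x ∈ θ.dom := by
  filter_upwards [eventually_forall_add_mul_le (B := θ.be) (C := fun _ => 0) hz hx] with t ht j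
  simpa [inner_add_right, real_inner_smul_right] using ht j

/-- Polyhedral description of the critical cone `𝒦(zb, vb)`. -/
def critPoly (zb vb : Ev m) : Set (Ev m) :=
  {x | (∀ j ∈ θ.Iact zb, ⟪θ.d j, x⟫ ≤ 0) ∧ ∀ i ∈ θ.Kact zb, ⟪θ.a i, x⟫ ≤ ⟪vb, x⟫}

theorem crit_subset_critPoly (zb vb : Ev m) : θ.crit zb vb ⊆ θ.critPoly zb vb := by
  rintro u ⟨htan, hlim⟩
  obtain ⟨i₀, -, hmax, hval⟩ := θ.exists_eventually_val_add_smul zb u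
  have hslope : ⟪θ.a i₀, u⟫ = ⟪vb, u⟫ := by
    refine tendsto_nhds_unique (tendsto_const_nhds.congr' ?_) hlim
    filter_upwards [hval, self_mem_nhdsWithin] with t hv ht
    rw [hv, add_sub_cancel_left, mul_div_cancel_left₀ _ (ne_of_gt ht)]
  refine ⟨fun j hj => inner_le_zero_of_mem_tcone htan fun z hz => ?_,
    fun i hi => (hmax i hi).trans hslope.le⟩
  rw [inner_sub_right, hj]
  linarith [hz j]

variable {θ} {zb vb : Ev m}

theorem eventually_along_critPoly (hzv : vb ∈ θ.subdiff zb) {x : Ev m}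
    (hx : x ∈ θ.critPoly zb vb) :
    ∀ᶠ t in 𝓝[>] (0 : ℝ), zb + t • x ∈ θ.dom ∧ θ.val (zb + t • x) = θ.val zb + t * ⟪vb, x⟫ := by
  obtain ⟨i₀, hi₀, -, hval⟩ := θ.exists_eventually_val_add_smul zb x
  have hdom := θ.eventually_add_smul_mem_dom hzv.1 hx.1
  have hslope : ⟪θ.a i₀, x⟫ = ⟪vb, x⟫ := by
    obtain ⟨t, ht, hd, hv⟩ := (eventually_mem_nhdsWithin.and (hdom.and hval)).exists
    have := hzv.2 _ hd
    rw [add_sub_cancel_left, real_inner_smul_right, hv] at this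
    exact le_antisymm (hx.2 i₀ hi₀) (le_of_mul_le_mul_left (by linarith) ht)
  filter_upwards [hdom, hval] with t hd hv
  exact ⟨hd, hslope ▸ hv⟩

theorem val_sub_le_inner {z z' v' : Ev m} (hv' : v' ∈ θ.subdiff z') (hz : z ∈ θ.dom) :
    θ.val z' - θ.val z ≤ ⟪v', z' - z⟫ := by
  have := hv'.2 z hz
  rw [← neg_sub z' z, inner_neg_right] at this
  linarith

theorem tcone_gph_subset (hzv : vb ∈ θ.subdiff zb) {u w : Ev m}
    (huw : (u, w) ∈ tcone θ.gph (zb, vb)) :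
    u ∈ θ.critPoly zb vb ∧ (∀ x ∈ θ.critPoly zb vb, ⟪w, x⟫ ≤ 0) ∧ ⟪w, u⟫ = 0 := by
  have hmono : ∀ zv ∈ θ.gph, ⟪vb, zv.1⟫ - ⟪vb, zb⟫ ≤ θ.val zv.1 - θ.val zb ∧
      θ.val zv.1 - θ.val zb ≤ ⟪zv.2, zv.1⟫ - ⟪zv.2, zb⟫ := fun zv hzv' => by
    rw [← inner_sub_right, ← inner_sub_right]
    exact ⟨hzv.2 _ hzv'.1, val_sub_le_inner hzv' hzv.1⟩
  have hpolar : ∀ x ∈ θ.critPoly zb vb, ⟪w, x⟫ ≤ 0 := by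
    intro x hx
    obtain ⟨t, ht, hdom, hval⟩ := (eventually_mem_nhdsWithin.and
      (eventually_along_critPoly hzv hx)).exists
    have := inner_add_inner_le_zero_of_mem_tcone (p := 0) (q := t • x) huw fun zv hzv' => by
      have := hzv'.2 _ hdom
      rw [add_sub_right_comm, hval] at this
      simp only [inner_add_right, inner_sub_left, inner_sub_right, real_inner_smul_left,
        real_inner_smul_right, inner_zero_left, real_inner_comm x] at this ⊢
      linarith [hmono zv hzv']
    rw [inner_zero_left, zero_add, real_inner_smul_left, real_inner_comm] at this
    exact nonpos_of_mul_nonpos_right this ht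
  have huC : u ∈ θ.critPoly zb vb := by
    refine ⟨fun j hj => ?_, fun i hi => ?_⟩
    · have := inner_add_inner_le_zero_of_mem_tcone (p := θ.d j) (q := 0) huw fun zv hzv' => by
        have hj : ⟪θ.d j, zb⟫ = θ.be j := hj
        simp only [inner_sub_left, inner_sub_right, inner_zero_left]
        linarith [hmono zv hzv', hzv'.1 j]
      simpa using this
    · have := inner_add_inner_le_zero_of_mem_tcone (p := θ.a i - vb) (q := 0) huw fun zv hzv' => by
        have hi : θ.val zb = ⟪θ.a i, zb⟫ - θ.al i := hi
        simp only [inner_sub_left, inner_sub_right, inner_zero_left]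
        linarith [hmono zv hzv', θ.le_val zv.1 i]
      simpa [inner_sub_left] using this
  refine ⟨huC, hpolar, le_antisymm (hpolar u huC) (inner_nonneg_of_mem_tcone huw fun zv hzv' => ?_)⟩
  simp only [inner_sub_left, inner_sub_right]
  linarith [hmono zv hzv']

/-- Farkas writes `w` as a nonnegative combination of the active `d j` and `a i - vb`, each of
which is dominated by the excess `θ z - θ zb - ⟪vb, z - zb⟫ ≥ 0` on `dom θ`. -/
theorem exists_inner_le_mul_excess (hzv : vb ∈ θ.subdiff zb) {w : Ev m}
    (hw : ∀ x ∈ θ.critPoly zb vb, ⟪w, x⟫ ≤ 0) :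
    ∃ γ, 0 ≤ γ ∧ ∀ z ∈ θ.dom,
      ⟪w, z - zb⟫ ≤ γ * (θ.val z - θ.val zb - ⟪vb, z - zb⟫) := by
  classical
  let g : Fin θ.p ⊕ Fin θ.l → Ev m := Sum.elim θ.d fun i => θ.a i - vb
  let s := Finset.univ.filter fun k => Sum.elim (· ∈ θ.Iact zb) (· ∈ θ.Kact zb) k
  obtain ⟨c, hc, rfl⟩ := exists_nonneg_eq_sum_smul_of_inner_le s g w fun x hx =>
    hw x ⟨fun j hj => hx (.inl j) (by simp [s, hj]), fun i hi => by
      simpa [g, inner_sub_left] using hx (.inr i) (by simp [s, hi])⟩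
  refine ⟨∑ k ∈ s, c k, Finset.sum_nonneg fun k _ => hc k, fun z hz => ?_⟩
  have hexcess : 0 ≤ θ.val z - θ.val zb - ⟪vb, z - zb⟫ := by linarith [hzv.2 z hz]
  have hg : ∀ k ∈ s, ⟪g k, z - zb⟫ ≤ θ.val z - θ.val zb - ⟪vb, z - zb⟫ := by
    rintro (j | i) hk <;> simp only [s, Finset.mem_filter, Finset.mem_univ, true_and,
      Sum.elim_inl, Sum.elim_inr] at hk
    · have hj : ⟪θ.d j, zb⟫ = θ.be j := hk
      refine le_trans ?_ hexcess
      simp only [g, Sum.elim_inl, inner_sub_right, hj]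
      linarith [hz j]
    · have hi : θ.val zb = ⟪θ.a i, zb⟫ - θ.al i := hk
      simp only [g, Sum.elim_inr, inner_sub_left, inner_sub_right] at hi ⊢
      linarith [θ.le_val z i]
  rw [sum_inner, Finset.sum_mul]
  exact Finset.sum_le_sum fun k hk => by
    rw [real_inner_smul_left]; exact mul_le_mul_of_nonneg_left (hg k hk) (hc k)

theorem mem_tcone_gph (hzv : vb ∈ θ.subdiff zb) {u w : Ev m} (hu : u ∈ θ.critPoly zb vb)
    (hw : ∀ x ∈ θ.critPoly zb vb, ⟪w, x⟫ ≤ 0) (hwu : ⟪w, u⟫ = 0) :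
    (u, w) ∈ tcone θ.gph (zb, vb) := by
  obtain ⟨γ, hγ, hbound⟩ := exists_inner_le_mul_excess hzv hw
  apply mem_tcone_of_eventually
  have hsmall : ∀ᶠ t in 𝓝[>] (0 : ℝ), t * γ < 1 :=
    nhdsWithin_le_nhds (ContinuousAt.eventually_lt (by fun_prop) (by fun_prop) (by simp))
  filter_upwards [eventually_along_critPoly hzv hu, eventually_mem_nhdsWithin, hsmall]
    with t ⟨hdom, hval⟩ ht htγ
  refine ⟨hdom, fun z hz => ?_⟩
  have hexcess : 0 ≤ θ.val z - θ.val zb - ⟪vb, z - zb⟫ := by linarith [hzv.2 z hz]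
  have h1 := mul_le_mul_of_nonneg_left (hbound z hz) (le_of_lt ht)
  have h2 := mul_le_mul_of_nonneg_right htγ.le hexcess
  simp only [Prod.fst_add, Prod.snd_add, Prod.smul_fst, Prod.smul_snd, hval, sub_add_eq_sub_sub,
    inner_add_left, inner_sub_right, real_inner_smul_left, real_inner_smul_right, hwu] at h1 h2 ⊢
  nlinarith

theorem tcone_gph_eq (hzv : vb ∈ θ.subdiff zb) :
    tcone θ.gph (zb, vb) = {h | h.1 ∈ θ.critPoly zb vb ∧
      (∀ x ∈ θ.critPoly zb vb, ⟪h.2, x⟫ ≤ 0) ∧ ⟪h.2, h.1⟫ = 0} := by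
  ext ⟨u, w⟩
  exact ⟨tcone_gph_subset hzv, fun ⟨hu, hw, hwu⟩ => mem_tcone_gph hzv hu hw hwu⟩

theorem Dhat_neg_eq (hzv : vb ∈ θ.subdiff zb) {u : Ev m} (hu : u ∈ θ.critPoly zb vb) :
    θ.Dhat zb vb (-u) = {w | ∀ x ∈ θ.critPoly zb vb, ⟪w, x⟫ ≤ 0} := by
  ext w
  simp only [Dhat, tcone_gph_eq hzv, inner_neg_left, sub_neg_eq_add]
  refine ⟨fun hw x hx => by simpa using hw (x, 0) ⟨hx, by simp, by simp⟩,
    fun hw h ⟨h1, h2, _⟩ => ?_⟩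
  linarith [hw _ h1, h2 u hu, real_inner_comm u h.2]

theorem Dsub_eq (hzv : vb ∈ θ.subdiff zb) {u : Ev m} (hu : u ∈ θ.critPoly zb vb) :
    θ.Dsub zb vb u = {w | (∀ x ∈ θ.critPoly zb vb, ⟪w, x⟫ ≤ 0) ∧ ⟪w, u⟫ = 0} := by
  ext w
  simp [Dsub, tcone_gph_eq hzv, hu]

end CPWL

/-- the graphical derivative as the minimizing subset of the regular coderivative. -/
theorem stmt4 {m : ℕ} (θ : CPWL m) (zb vb : Ev m) (hzv : vb ∈ θ.subdiff zb) :
    ∀ u ∈ θ.crit zb vb,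
      θ.Dsub zb vb u = {w : Ev m | w ∈ θ.Dhat zb vb (-u) ∧ ⟪w, u⟫ = 0} ∧
      θ.Dsub zb vb u =
        {w : Ev m | w ∈ θ.Dhat zb vb (-u) ∧
          ∀ w' ∈ θ.Dhat zb vb (-u), -⟪w, u⟫ ≤ -⟪w', u⟫} := by
  intro u hu
  have huC := θ.crit_subset_critPoly zb vb hu
  rw [CPWL.Dsub_eq hzv huC, CPWL.Dhat_neg_eq hzv huC]
  refine ⟨rfl, Set.ext fun w => and_congr_right fun hw => ⟨fun hwu w' hw' => ?_, fun hmin => ?_⟩⟩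
  · linarith [hw' u huC]
  · exact le_antisymm (hw u huC) (by simpa using hmin 0 fun x _ => by simp)
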